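/- arXiv:2302.11039 — 2 statements merged into one kernel-verified Lean document; each statement's English description precedes it below -/
import Mathlib

section
/- Let K be a field of characteristic 0, U a nonempty finite subset of ℤ, and V ⊆ U with |V| = 2d and d ≤ k. For any matching M ∈ M(V,d) of the complete graph on V consisting of d edges, the partial derivative ∂^M Φ_{U,k} equals Φ_{U∖V, k−d}. -/
open MvPolynomial Finset

noncomputable section

/-- The set of matchings with exactly `k` edges of the complete graph on vertex set `V ⊆ ℤ`:
sets of `k` pairwise disjoint 2-element subsets of `V`. -/
def matchings (V : Finset ℤ) (k : ℕ) : Finset (Finset (Finset ℤ)) :=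
  (V.powersetCard 2).powerset.filter fun M =>
    M.card = k ∧ ∀ e ∈ M, ∀ f ∈ M, e ≠ f → Disjoint e f

/-- `S` is a matching of the complete graph on vertex set `V`. -/
def IsMatching (V : Finset ℤ) (S : Finset (Finset ℤ)) : Prop :=
  S ⊆ V.powersetCard 2 ∧ ∀ e ∈ S, ∀ f ∈ S, e ≠ f → Disjoint e f

/-- The weighted generating function `Φ_{V,k} = Σ_{M ∈ M(V,k)} x^M` of `k`-edge matchings,
an element of the polynomial ring with variables indexed by (potential) edges. -/
def Phi (K : Type*) [Field K] (V : Finset ℤ) (k : ℕ) : MvPolynomial (Finset ℤ) K :=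
  ∑ M ∈ matchings V k, ∏ e ∈ M, X e

/-- The differential operator `∂^S = Π_{i ∈ S} ∂/∂x_i` applied to `p`. -/
def dset {K : Type*} [CommSemiring K] {ι : Type*} [DecidableEq ι]
    (S : Finset ι) (p : MvPolynomial ι K) : MvPolynomial ι K :=
  S.toList.foldr (fun i q => pderiv i q) p

/-- The differential operator `∂^m = Π_i (∂/∂x_i)^{m i}` of a monomial exponent `m`. -/
def dmon {K : Type*} [CommSemiring K] {ι : Type*} [DecidableEq ι]
    (m : ι →₀ ℕ) (p : MvPolynomial ι K) : MvPolynomial ι K :=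
  m.support.toList.foldr (fun i q => (⇑(pderiv (R := K) i))^[m i] q) p

/-- The linear map `f ↦ f(∂)Φ`, where `f(∂)` is obtained from `f` by substituting
`∂/∂x_i` for `x_i`. -/
def diffOp (K : Type*) [Field K] {ι : Type*} [DecidableEq ι]
    (Φ : MvPolynomial ι K) : MvPolynomial ι K →ₗ[K] MvPolynomial ι K :=
  (basisMonomials ι K).constr K fun m => dmon m Φ

/-- The annihilator `Ann(Φ) = {f : f(∂)Φ = 0}`. -/
def Ann (K : Type*) [Field K] {ι : Type*} [DecidableEq ι]
    (Φ : MvPolynomial ι K) : Submodule K (MvPolynomial ι K) :=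
  LinearMap.ker (diffOp K Φ)

/-- The canonical matching `M(V) = {{v₁,v₂},{v₃,v₄},…}` on `V = {v₁ < v₂ < ⋯}`. -/
def canonMatching (V : Finset ℤ) : Finset (Finset ℤ) :=
  (Finset.range (V.card / 2)).image fun i =>
    ({(V.sort (· ≤ ·)).getD (2 * i) 0, (V.sort (· ≤ ·)).getD (2 * i + 1) 0} : Finset ℤ)

/-- The `n`-th elementary symmetric polynomial in the variables indexed by `U`. -/
def elemSymm (K : Type*) [Field K] {ι : Type*} (U : Finset ι) (n : ℕ) : MvPolynomial ι K :=
  ∑ S ∈ U.powersetCard n, ∏ i ∈ S, X i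

end

/-! `∂^M` kills every square-free monomial `x^N` with `M ⊄ N` and sends `x^N` to `x^(N \ M)`
otherwise. As `M` is a perfect matching of `V`, the `k`-edge matchings `N ⊇ M` of `U` are exactly
the sets `N' ∪ M` with `N'` a `(k - d)`-edge matching of `U \ V`, so `N ↦ N \ M` is a bijection
between the surviving terms of `∂^M Φ_{U,k}` and the terms of `Φ_{U \ V, k - d}`. -/

section PartialDerivatives

variable {R : Type*} [CommSemiring R] {ι : Type*} [DecidableEq ι]

lemma pderiv_prod_X_of_notMem {i : ι} {N : Finset ι} (hi : i ∉ N) :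
    pderiv i (∏ e ∈ N, (X e : MvPolynomial ι R)) = 0 := by
  nontriviality R
  refine pderiv_eq_zero_of_notMem_vars fun hvars => hi ?_
  obtain ⟨e, he, hie⟩ := Finset.mem_biUnion.mp (vars_prod _ hvars)
  rw [vars_X, Finset.mem_singleton] at hie
  rwa [hie]

lemma pderiv_prod_X (i : ι) (N : Finset ι) :
    pderiv i (∏ e ∈ N, (X e : MvPolynomial ι R)) =
      if i ∈ N then ∏ e ∈ N.erase i, X e else 0 := by
  split_ifs with hi
  · rw [← Finset.mul_prod_erase N _ hi, pderiv_mul, pderiv_X_self,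
      pderiv_prod_X_of_notMem (Finset.notMem_erase i N), mul_zero, add_zero, one_mul]
  · exact pderiv_prod_X_of_notMem hi

lemma foldr_pderiv_prod_X {l : List ι} (hl : l.Nodup) (N : Finset ι) :
    l.foldr (fun i q => pderiv i q) (∏ e ∈ N, (X e : MvPolynomial ι R)) =
      if l.toFinset ⊆ N then ∏ e ∈ N \ l.toFinset, X e else 0 := by
  induction l with
  | nil => simp
  | cons a l ih =>
    obtain ⟨hal, hl⟩ := List.nodup_cons.mp hl
    simp only [List.foldr_cons, ih hl, List.toFinset_cons, Finset.insert_subset_iff,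
      sdiff_insert]
    by_cases hlN : l.toFinset ⊆ N
    · simp [pderiv_prod_X, hlN, hal]
    · simp [hlN]

lemma dset_prod_X (S N : Finset ι) :
    dset S (∏ e ∈ N, (X e : MvPolynomial ι R)) =
      if S ⊆ N then ∏ e ∈ N \ S, X e else 0 := by
  unfold dset
  simpa using foldr_pderiv_prod_X (R := R) S.nodup_toList N

lemma dset_sum {α : Type*} (S : Finset ι) (t : Finset α) (f : α → MvPolynomial ι R) :
    dset S (∑ a ∈ t, f a) = ∑ a ∈ t, dset S (f a) := by
  unfold dset
  induction S.toList with
  | nil => rfl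
  | cons a l ih => simp [ih]

end PartialDerivatives

section Matchings

variable {U V W : Finset ℤ} {M N : Finset (Finset ℤ)} {d k n : ℕ}

lemma mem_matchings : M ∈ matchings V k ↔
    M ⊆ V.powersetCard 2 ∧ M.card = k ∧ ∀ e ∈ M, ∀ f ∈ M, e ≠ f → Disjoint e f := by
  simp only [matchings, Finset.mem_filter, Finset.mem_powerset]

lemma subset_of_mem_matchings (hM : M ∈ matchings V k) {e : Finset ℤ} (he : e ∈ M) :
    e ⊆ V ∧ e.card = 2 :=
  Finset.mem_powersetCard.mp ((mem_matchings.mp hM).1 he)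

lemma disjoint_of_mem_matchings (hVW : Disjoint V W) (hM : M ∈ matchings V d)
    (hN : N ∈ matchings W n) : Disjoint M N := by
  refine Finset.disjoint_left.mpr fun e heM heN => ?_
  obtain ⟨heV, hcard⟩ := subset_of_mem_matchings hM heM
  obtain ⟨x, hx⟩ := Finset.card_pos.mp (hcard ▸ two_pos : 0 < e.card)
  exact Finset.disjoint_left.mp hVW (heV hx) ((subset_of_mem_matchings hN heN).1 hx)

lemma union_mem_matchings (hVW : Disjoint V W) (hM : M ∈ matchings V d)
    (hN : N ∈ matchings W n) : M ∪ N ∈ matchings (V ∪ W) (d + n) := by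
  obtain ⟨-, hMcard, hMdisj⟩ := mem_matchings.mp hM
  obtain ⟨-, hNcard, hNdisj⟩ := mem_matchings.mp hN
  refine mem_matchings.mpr ⟨fun e he => ?_, ?_, fun e he f hf hef => ?_⟩
  · rw [Finset.mem_powersetCard]
    rcases Finset.mem_union.mp he with he | he
    · exact (subset_of_mem_matchings hM he).imp_left (·.trans Finset.subset_union_left)
    · exact (subset_of_mem_matchings hN he).imp_left (·.trans Finset.subset_union_right)
  · rw [Finset.card_union_of_disjoint (disjoint_of_mem_matchings hVW hM hN), hMcard, hNcard]
  · rcases Finset.mem_union.mp he with he | he <;> rcases Finset.mem_union.mp hf with hf | hf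
    · exact hMdisj e he f hf hef
    · exact hVW.mono (subset_of_mem_matchings hM he).1 (subset_of_mem_matchings hN hf).1
    · exact hVW.symm.mono (subset_of_mem_matchings hN he).1 (subset_of_mem_matchings hM hf).1
    · exact hNdisj e he f hf hef

lemma biUnion_eq_of_mem_matchings (hM : M ∈ matchings V d) (hV : V.card = 2 * d) :
    M.biUnion id = V := by
  obtain ⟨-, hMcard, hMdisj⟩ := mem_matchings.mp hM
  refine Finset.eq_of_subset_of_card_le
    (Finset.biUnion_subset.mpr fun e he => (subset_of_mem_matchings hM he).1) ?_
  rw [Finset.card_biUnion (t := id) hMdisj, hV, ← hMcard, mul_comm, ← smul_eq_mul,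
    ← Finset.sum_const]
  exact (Finset.sum_congr rfl fun e he => (subset_of_mem_matchings hM he).2).ge

lemma sdiff_mem_matchings (hM : M ∈ matchings V d) (hV : V.card = 2 * d)
    (hN : N ∈ matchings U k) (hMN : M ⊆ N) : N \ M ∈ matchings (U \ V) (k - d) := by
  obtain ⟨-, hNcard, hNdisj⟩ := mem_matchings.mp hN
  refine mem_matchings.mpr ⟨fun e he => ?_, ?_, fun e he f hf =>
    hNdisj e (Finset.sdiff_subset he) f (Finset.sdiff_subset hf)⟩
  · obtain ⟨heN, heM⟩ := Finset.mem_sdiff.mp he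
    obtain ⟨heU, hcard⟩ := subset_of_mem_matchings hN heN
    have heV : Disjoint e V := by
      rw [← biUnion_eq_of_mem_matchings hM hV, Finset.disjoint_biUnion_right]
      exact fun f hf => hNdisj e heN f (hMN hf) fun h => heM (h ▸ hf)
    exact Finset.mem_powersetCard.mpr ⟨Finset.subset_sdiff.mpr ⟨heU, heV⟩, hcard⟩
  · rw [Finset.card_sdiff_of_subset hMN, hNcard, (mem_matchings.mp hM).2.1]

end Matchings

theorem dset_matching_Phi_general {K : Type*} [Field K]
    (U V : Finset ℤ) (hVU : V ⊆ U) (d k : ℕ)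
    (hVcard : V.card = 2 * d) (hdk : d ≤ k)
    (M : Finset (Finset ℤ)) (hM : M ∈ matchings V d) :
    dset M (Phi K U k) = Phi K (U \ V) (k - d) := by
  rw [Phi, dset_sum]
  simp only [dset_prod_X]
  rw [← Finset.sum_filter, Phi]
  refine Finset.sum_nbij' (· \ M) (· ∪ M) (fun N hN => ?_) (fun N hN => ?_) (fun N hN => ?_)
    (fun N hN => ?_) fun _ _ => rfl
  · obtain ⟨hN, hMN⟩ := Finset.mem_filter.mp hN
    exact sdiff_mem_matchings hM hVcard hN hMN
  · have hNM := union_mem_matchings Finset.sdiff_disjoint hN hM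
    rw [Finset.sdiff_union_of_subset hVU, Nat.sub_add_cancel hdk] at hNM
    exact Finset.mem_filter.mpr ⟨hNM, Finset.subset_union_right⟩
  · exact Finset.sdiff_union_of_subset (Finset.mem_filter.mp hN).2
  · exact Finset.union_sdiff_cancel_right (disjoint_of_mem_matchings Finset.sdiff_disjoint hN hM)

/-- for `V ⊆ U` with `|V| = 2d`, `d ≤ k`, and any matching `M ∈ M(V,d)`,
`∂^M Φ_{U,k} = Φ_{U∖V, k−d}`. -/
theorem dset_matching_Phi {K : Type*} [Field K] [CharZero K]
    (U V : Finset ℤ) (hU : U.Nonempty) (hVU : V ⊆ U) (d k : ℕ)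
    (hVcard : V.card = 2 * d) (hdk : d ≤ k)
    (M : Finset (Finset ℤ)) (hM : M ∈ matchings V d) :
    dset M (Phi K U k) = Phi K (U \ V) (k - d) :=
  dset_matching_Phi_general U V hVU d k hVcard hdk M hM
end

section
/- Let K be a field of characteristic 0 and U a nonempty finite subset of ℤ with 2k ≤ |U|, and let d satisfy 2d ≤ k. Then the images in A_{U,k} = P_U/Ann(Φ_{U,k}) of the monomials {x^{M(V)} : V ∈ C(U,2d)} form a basis of the degree-d homogeneous component A^{(d)} as a K-vector space. -/
open MvPolynomial Finset

/-!
Send `f` to `f(∂)Φ_{U,k}`; the kernel of this map is `Ann(Φ_{U,k})`. A monomial `x^m` is killed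
unless `m` is the indicator of a matching `S` of `K_U` with at most `k` edges, and then it is sent
to `Φ_{U \ V(S), k - |S|}`, which only depends on the vertex set `V(S)`. So in degree `d` the
classes of the `x^{M(V)}`, `V ∈ C(U,2d)`, span, and they are independent as soon as the
`Φ_{U \ V, k - d}` are. Reading off the coefficient of `x^{M(S)}` for `S ∈ C(U, 2(k-d))`, this
is the injectivity of the disjointness matrix between `C(U,2d)` and `C(U,2(k-d))`, which holds for
`2d ≤ 2(k-d)` and `2k ≤ |U|`: summing the equations over all `S ⊇ T` gives the same equations for
every smaller `T` (with a positive binomial multiplicity, invertible in characteristic `0`), and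
inclusion–exclusion over the `T ⊆ V₀` then isolates the unknown indexed by `V₀`.
-/

section DifferentialOperators

variable {R : Type*} [CommSemiring R] {ι : Type*}

theorem dmon_eq_list_prod [DecidableEq ι] (m : ι →₀ ℕ) (p : MvPolynomial ι R) :
    dmon m p = (m.support.toList.map fun i => (pderiv (R := R) i).toLinearMap ^ m i).prod p := by
  rw [dmon]
  induction m.support.toList with
  | nil => rfl
  | cons i l ih => simp [ih, Module.End.coe_pow]

theorem pderiv_pow_monomial (i : ι) (n : ℕ) (s : ι →₀ ℕ) (a : R) :
    ((pderiv i).toLinearMap ^ n) (monomial s a) =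
      monomial (s - Finsupp.single i n) (a * (s i).descFactorial n) := by
  induction n with
  | zero => simp
  | succ n ih =>
    rw [pow_succ', Module.End.mul_apply, ih, Derivation.coeFn_coe,
      pderiv_monomial, tsub_tsub, ← Finsupp.single_add, Finsupp.tsub_apply,
      Finsupp.single_eq_same, Nat.descFactorial_succ]
    push_cast
    ring_nf

theorem list_prod_pderiv_pow_monomial (m : ι →₀ ℕ) {l : List ι} (hl : l.Nodup)
    (s : ι →₀ ℕ) (a : R) :
    (l.map fun i => (pderiv (R := R) i).toLinearMap ^ m i).prod (monomial s a) =
      monomial (s - (l.map fun i => Finsupp.single i (m i)).sum)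
        (a * (l.map fun i => ((s i).descFactorial (m i) : R)).prod) := by
  induction l with
  | nil => simp
  | cons i l ih =>
    obtain ⟨hi, hl⟩ := List.nodup_cons.1 hl
    have hfresh : (l.map fun j => Finsupp.single j (m j)).sum i = 0 := by
      rw [← Finsupp.applyAddHom_apply, map_list_sum, List.map_map]
      exact List.sum_eq_zero fun x hx => by
        obtain ⟨j, hj, rfl⟩ := List.mem_map.1 hx
        exact Finsupp.single_eq_of_ne fun h => hi (h ▸ hj)
    rw [List.map_cons, List.prod_cons, Module.End.mul_apply, ih hl, pderiv_pow_monomial,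
      Finsupp.tsub_apply, hfresh, tsub_zero, tsub_tsub, List.map_cons, List.sum_cons,
      add_comm (Finsupp.single i (m i)), List.map_cons, List.prod_cons]
    ring_nf

theorem dmon_monomial [DecidableEq ι] (m s : ι →₀ ℕ) (a : R) :
    dmon m (monomial s a) =
      monomial (s - m) (a * ∏ i ∈ m.support, ((s i).descFactorial (m i) : R)) := by
  rw [dmon_eq_list_prod, list_prod_pderiv_pow_monomial m m.support.nodup_toList,
    Finset.sum_map_toList, Finset.prod_map_toList,
    show ∑ i ∈ m.support, Finsupp.single i (m i) = m from m.sum_single]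

end DifferentialOperators

section IndicatorExponent

variable {ι : Type*}

noncomputable def indicatorExp (S : Finset ι) : ι →₀ ℕ := ∑ i ∈ S, Finsupp.single i 1

theorem degree_indicatorExp (S : Finset ι) : (indicatorExp S).degree = S.card := by
  simp [indicatorExp]

theorem prod_X_eq_monomial_indicatorExp {R : Type*} [CommSemiring R] (S : Finset ι) :
    ∏ i ∈ S, (X i : MvPolynomial ι R) = monomial (indicatorExp S) 1 :=
  (monomial_sum_one S _).symm

variable [DecidableEq ι]

theorem indicatorExp_apply (S : Finset ι) (i : ι) :
    indicatorExp S i = if i ∈ S then 1 else 0 := by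
  simp [indicatorExp, Finsupp.finsetSum_apply, Finsupp.single_apply]

theorem support_indicatorExp (S : Finset ι) : (indicatorExp S).support = S := by
  ext i
  simp [indicatorExp_apply]

theorem indicatorExp_injective : Function.Injective (indicatorExp (ι := ι)) := fun S T h => by
  rw [← support_indicatorExp S, h, support_indicatorExp]

theorem indicatorExp_le_iff {S T : Finset ι} : indicatorExp S ≤ indicatorExp T ↔ S ⊆ T := by
  simp only [Finsupp.le_def, indicatorExp_apply]
  refine ⟨fun h i hi => ?_, fun h i => ?_⟩
  · by_contra hT
    simpa [hi, hT] using h i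
  · by_cases hi : i ∈ S
    · simp [hi, h hi]
    · simp [hi]

theorem indicatorExp_sub (S T : Finset ι) :
    indicatorExp T - indicatorExp S = indicatorExp (T \ S) := by
  ext i
  by_cases hT : i ∈ T <;> by_cases hS : i ∈ S <;> simp [indicatorExp_apply, hT, hS]

theorem eq_indicatorExp_support_of_le {m : ι →₀ ℕ} {T : Finset ι} (h : m ≤ indicatorExp T) :
    m = indicatorExp m.support := by
  ext i
  have := h i
  simp only [indicatorExp_apply, Finsupp.mem_support_iff] at this ⊢
  split_ifs at this ⊢ <;> omega

theorem dmon_monomial_indicatorExp {R : Type*} [CommSemiring R] (m : ι →₀ ℕ) (T : Finset ι)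
    (a : R) : dmon m (monomial (indicatorExp T) a) =
      if m ≤ indicatorExp T then monomial (indicatorExp T - m) a else 0 := by
  rw [dmon_monomial]
  split_ifs with h
  · rw [Finset.prod_eq_one, mul_one]
    intro i hi
    have := h i
    rw [Finsupp.mem_support_iff] at hi
    rw [indicatorExp_apply] at this ⊢
    split_ifs at this ⊢
    · simp [show m i = 1 by omega]
    · omega
  · obtain ⟨i, hi⟩ := not_forall.1 (Finsupp.le_def.not.1 h)
    rw [Finset.prod_eq_zero (i := i) (Finsupp.mem_support_iff.2 (by omega)) (by
      rw [Nat.descFactorial_eq_zero_iff_lt.2 (not_le.1 hi), Nat.cast_zero]), mul_zero, map_zero]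

end IndicatorExponent

section Matchings

def verts (S : Finset (Finset ℤ)) : Finset ℤ := S.biUnion id

variable {U W : Finset ℤ} {S T : Finset (Finset ℤ)}

theorem mem_matchings_s9 {k : ℕ} : S ∈ matchings U k ↔ IsMatching U S ∧ S.card = k := by
  simp [matchings, IsMatching, and_assoc, and_comm (a := S.card = k)]

theorem IsMatching.subset (hS : IsMatching U S) (hTS : T ⊆ S) : IsMatching U T :=
  ⟨hTS.trans hS.1, fun e he f hf => hS.2 e (hTS he) f (hTS hf)⟩

theorem IsMatching.mono (hS : IsMatching U S) (hUW : U ⊆ W) : IsMatching W S :=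
  ⟨hS.1.trans (Finset.powersetCard_mono hUW), hS.2⟩

theorem IsMatching.verts_subset (hS : IsMatching U S) : verts S ⊆ U :=
  Finset.biUnion_subset.2 fun _ he => (Finset.mem_powersetCard.1 (hS.1 he)).1

theorem IsMatching.card_verts (hS : IsMatching U S) : (verts S).card = 2 * S.card := by
  rw [verts, Finset.card_biUnion (t := id) fun e he f hf hef => hS.2 e he f hf hef,
    mul_comm]
  exact Finset.sum_const_nat fun e he => (Finset.mem_powersetCard.1 (hS.1 he)).2

theorem isMatching_sdiff_iff : IsMatching (U \ W) T ↔ IsMatching U T ∧ Disjoint (verts T) W := by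
  simp only [IsMatching, verts, Finset.disjoint_biUnion_left, id, Finset.subset_iff (s₁ := T),
    Finset.mem_powersetCard, Finset.subset_sdiff]
  aesop

theorem disjoint_verts_iff :
    Disjoint (verts S) (verts T) ↔ ∀ e ∈ S, ∀ f ∈ T, Disjoint e f := by
  simp_rw [verts, Finset.disjoint_biUnion_left, Finset.disjoint_biUnion_right, id]

theorem IsMatching.union (hS : IsMatching U S) (hT : IsMatching U T)
    (hST : Disjoint (verts S) (verts T)) : IsMatching U (S ∪ T) := by
  refine ⟨Finset.union_subset hS.1 hT.1, ?_⟩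
  rw [disjoint_verts_iff] at hST
  simp only [Finset.mem_union]
  rintro e (he | he) f (hf | hf) hef
  exacts [hS.2 e he f hf hef, hST e he f hf, (hST f hf e he).symm, hT.2 e he f hf hef]

theorem IsMatching.disjoint_of_disjoint_verts (hS : IsMatching U S)
    (hST : Disjoint (verts S) (verts T)) : Disjoint S T := by
  refine Finset.disjoint_left.2 fun e heS heT => ?_
  have he : Disjoint e e := Finset.disjoint_of_subset_left (Finset.subset_biUnion_of_mem id heS)
    (Finset.disjoint_of_subset_right (Finset.subset_biUnion_of_mem id heT) hST)
  have := (Finset.mem_powersetCard.1 (hS.1 heS)).2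
  simp_all

theorem IsMatching.disjoint_verts_sdiff (hT : IsMatching U T) (hST : S ⊆ T) :
    Disjoint (verts (T \ S)) (verts S) := by
  rw [disjoint_verts_iff]
  exact fun e he f hf => hT.2 e (Finset.mem_sdiff.1 he).1 f (hST hf) fun h =>
    (Finset.mem_sdiff.1 he).2 (h ▸ hf)

end Matchings

section Annihilator

variable {K : Type*} [Field K] {ι : Type*} [DecidableEq ι]

theorem diffOp_monomial (Φ : MvPolynomial ι K) (m : ι →₀ ℕ) :
    diffOp K Φ (monomial m 1) = dmon m Φ := by
  simpa [diffOp] using (basisMonomials ι K).constr_basis K (fun m => dmon m Φ) m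

theorem mkQ_Ann_eq_iff {Φ f g : MvPolynomial ι K} :
    (Ann K Φ).mkQ f = (Ann K Φ).mkQ g ↔ diffOp K Φ f = diffOp K Φ g := by
  rw [Submodule.mkQ_apply, Submodule.mkQ_apply, Submodule.Quotient.eq, Ann, LinearMap.mem_ker,
    map_sub, sub_eq_zero]

end Annihilator

section DerivativesOfPhi

variable {K : Type*} [Field K] {U : Finset ℤ} {k : ℕ} {S : Finset (Finset ℤ)}

theorem Phi_eq_sum_monomial (U : Finset ℤ) (k : ℕ) :
    Phi K U k = ∑ M ∈ matchings U k, monomial (indicatorExp M) 1 := by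
  simp_rw [Phi, prod_X_eq_monomial_indicatorExp]

theorem coeff_indicatorExp_Phi (U : Finset ℤ) (k : ℕ) (N : Finset (Finset ℤ)) :
    coeff (indicatorExp N) (Phi K U k) = if N ∈ matchings U k then 1 else 0 := by
  simp_rw [Phi_eq_sum_monomial, coeff_sum, coeff_monomial, indicatorExp_injective.eq_iff]
  exact Finset.sum_ite_eq' _ _ _

theorem dmon_Phi (m : Finset ℤ →₀ ℕ) (U : Finset ℤ) (k : ℕ) :
    dmon m (Phi K U k) =
      ∑ M ∈ matchings U k with m ≤ indicatorExp M, monomial (indicatorExp M - m) 1 := by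
  rw [Phi_eq_sum_monomial, dmon_eq_list_prod, map_sum, Finset.sum_filter]
  simp_rw [← dmon_eq_list_prod, dmon_monomial_indicatorExp]

theorem dmon_indicatorExp_Phi (hS : IsMatching U S) (hk : S.card ≤ k) :
    dmon (indicatorExp S) (Phi K U k) = Phi K (U \ verts S) (k - S.card) := by
  rw [dmon_Phi, Phi_eq_sum_monomial]
  simp_rw [indicatorExp_le_iff, indicatorExp_sub]
  refine Finset.sum_nbij' (· \ S) (· ∪ S) ?_ ?_ ?_ ?_ fun _ _ => rfl
  · intro M hM
    simp only [Finset.mem_filter, mem_matchings_s9] at hM ⊢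
    obtain ⟨⟨hM, rfl⟩, hSM⟩ := hM
    exact ⟨isMatching_sdiff_iff.2 ⟨hM.subset Finset.sdiff_subset, hM.disjoint_verts_sdiff hSM⟩,
      Finset.card_sdiff_of_subset hSM⟩
  · intro T hT
    simp only [Finset.mem_filter, mem_matchings_s9, isMatching_sdiff_iff] at hT ⊢
    obtain ⟨⟨hT, hTS⟩, hcard⟩ := hT
    refine ⟨⟨hT.union hS hTS, ?_⟩, Finset.subset_union_right⟩
    rw [Finset.card_union_of_disjoint (hT.disjoint_of_disjoint_verts hTS)]
    omega
  · intro M hM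
    exact Finset.sdiff_union_of_subset (Finset.mem_filter.1 hM).2
  · intro T hT
    obtain ⟨hT, hTS⟩ := isMatching_sdiff_iff.1 (mem_matchings_s9.1 hT).1
    exact Finset.union_sdiff_cancel_right (hT.disjoint_of_disjoint_verts hTS)

theorem diffOp_prod_X_of_isMatching (hS : IsMatching U S) (hk : S.card ≤ k) :
    diffOp K (Phi K U k) (∏ e ∈ S, X e) = Phi K (U \ verts S) (k - S.card) := by
  rw [prod_X_eq_monomial_indicatorExp, diffOp_monomial, dmon_indicatorExp_Phi hS hk]

end DerivativesOfPhi

section CanonicalMatching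

variable {V : Finset ℤ}

def canonEdge (V : Finset ℤ) (i : ℕ) : Finset ℤ :=
  {(V.sort (· ≤ ·)).getD (2 * i) 0, (V.sort (· ≤ ·)).getD (2 * i + 1) 0}

theorem canonMatching_eq_image (V : Finset ℤ) :
    canonMatching V = (Finset.range (V.card / 2)).image (canonEdge V) := rfl

theorem getD_sort_mem {a : ℕ} (ha : a < V.card) : (V.sort (· ≤ ·)).getD a 0 ∈ V := by
  rw [List.getD_eq_getElem _ _ (by simpa using ha), ← Finset.mem_sort (· ≤ ·)]
  exact List.getElem_mem _

theorem getD_sort_inj {a b : ℕ} (ha : a < V.card) (hb : b < V.card)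
    (h : (V.sort (· ≤ ·)).getD a 0 = (V.sort (· ≤ ·)).getD b 0) : a = b := by
  rw [List.getD_eq_getElem _ _ (by simpa using ha),
    List.getD_eq_getElem _ _ (by simpa using hb)] at h
  exact (Finset.sort_nodup _ _).getElem_inj_iff.1 h

theorem mem_canonEdge {x : ℤ} {i : ℕ} :
    x ∈ canonEdge V i ↔ ∃ a, a / 2 = i ∧ (V.sort (· ≤ ·)).getD a 0 = x := by
  simp only [canonEdge, Finset.mem_insert, Finset.mem_singleton]
  constructor
  · rintro (rfl | rfl)
    exacts [⟨2 * i, by omega, rfl⟩, ⟨2 * i + 1, by omega, rfl⟩]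
  · rintro ⟨a, ha, rfl⟩
    rcases (by omega : a = 2 * i ∨ a = 2 * i + 1) with rfl | rfl
    exacts [Or.inl rfl, Or.inr rfl]

theorem canonEdge_mem_powersetCard {i : ℕ} (hi : i < V.card / 2) :
    canonEdge V i ∈ V.powersetCard 2 := by
  refine Finset.mem_powersetCard.2 ⟨fun x hx => ?_, Finset.card_pair fun h => ?_⟩
  · obtain ⟨a, ha, rfl⟩ := mem_canonEdge.1 hx
    exact getD_sort_mem (by omega)
  · have := getD_sort_inj (by omega) (by omega) h
    omega

theorem disjoint_canonEdge {i j : ℕ} (hi : i < V.card / 2) (hj : j < V.card / 2) (hij : i ≠ j) :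
    Disjoint (canonEdge V i) (canonEdge V j) := by
  refine Finset.disjoint_left.2 fun x hxi hxj => hij ?_
  obtain ⟨a, rfl, rfl⟩ := mem_canonEdge.1 hxi
  obtain ⟨b, rfl, hb⟩ := mem_canonEdge.1 hxj
  rw [getD_sort_inj (by omega) (by omega) hb]

theorem isMatching_canonMatching (V : Finset ℤ) : IsMatching V (canonMatching V) := by
  rw [canonMatching_eq_image]
  refine ⟨Finset.image_subset_iff.2 fun i hi =>
    canonEdge_mem_powersetCard (Finset.mem_range.1 hi), ?_⟩
  simp only [Finset.mem_image, Finset.mem_range]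
  rintro _ ⟨i, hi, rfl⟩ _ ⟨j, hj, rfl⟩ hij
  exact disjoint_canonEdge hi hj fun h => hij (h ▸ rfl)

theorem card_canonMatching (V : Finset ℤ) : (canonMatching V).card = V.card / 2 := by
  rw [canonMatching_eq_image, Finset.card_image_of_injOn, Finset.card_range]
  intro i hi j hj hij
  by_contra hne
  have hj' := Finset.mem_range.1 hj
  have hempty := disjoint_canonEdge (Finset.mem_range.1 hi) hj' hne
  rw [hij, disjoint_self, Finset.bot_eq_empty] at hempty
  simpa [hempty] using Finset.mem_powersetCard.1 (canonEdge_mem_powersetCard (V := V) hj')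

theorem card_canonMatching_of_card_eq {d : ℕ} (hV : V.card = 2 * d) :
    (canonMatching V).card = d := by
  rw [card_canonMatching, hV, Nat.mul_div_cancel_left _ two_pos]

theorem verts_canonMatching (hV : Even V.card) : verts (canonMatching V) = V :=
  Finset.eq_of_subset_of_card_le (isMatching_canonMatching V).verts_subset <| by
    rw [(isMatching_canonMatching V).card_verts, card_canonMatching, Nat.two_mul_div_two_of_even hV]

end CanonicalMatching

section DisjointnessMatrix

variable {α : Type*} [DecidableEq α] {R : Type*} [CommRing R]

theorem card_filter_superset_disjoint {U V T : Finset α} {t : ℕ} (hVU : V ⊆ U)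
    (hT : T ⊆ U \ V) (hTt : T.card ≤ t) :
    ((U.powersetCard t).filter fun S => T ⊆ S ∧ Disjoint V S).card =
      (U.card - V.card - T.card).choose (t - T.card) := by
  rw [← Finset.card_sdiff_of_subset hVU, ← Finset.card_filter_powersetCard_subset T _ t hT hTt]
  congr 1
  ext S
  simp only [Finset.mem_filter, Finset.mem_powersetCard, Finset.subset_sdiff, disjoint_comm]
  tauto

theorem sum_disjoint_eq_zero_of_card_le [NoZeroDivisors R] [CharZero R] {U : Finset α}
    {s t : ℕ} (hU : s + t ≤ U.card) {c : Finset α → R}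
    (hc : ∀ S ∈ U.powersetCard t, ∑ V ∈ U.powersetCard s with Disjoint V S, c V = 0)
    {T : Finset α} (hTU : T ⊆ U) (hTt : T.card ≤ t) :
    ∑ V ∈ U.powersetCard s with Disjoint V T, c V = 0 := by
  set C := (U.card - s - T.card).choose (t - T.card)
  have hcount : ∀ V ∈ U.powersetCard s,
      ∑ S ∈ U.powersetCard t with T ⊆ S ∧ Disjoint V S, c V =
        if Disjoint V T then (C : R) * c V else 0 := by
    intro V hV
    obtain ⟨hVU, rfl⟩ := Finset.mem_powersetCard.1 hV
    split_ifs with hVT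
    · rw [Finset.sum_const, card_filter_superset_disjoint hVU
        (Finset.subset_sdiff.2 ⟨hTU, hVT.symm⟩) hTt, nsmul_eq_mul]
    · refine Finset.sum_eq_zero fun S hS => absurd ?_ hVT
      obtain ⟨hTS, hVS⟩ := (Finset.mem_filter.1 hS).2
      exact hVS.mono_right hTS
  have hdouble : (C : R) * ∑ V ∈ U.powersetCard s with Disjoint V T, c V =
      ∑ S ∈ U.powersetCard t with T ⊆ S, ∑ V ∈ U.powersetCard s with Disjoint V S, c V :=
    calc (C : R) * ∑ V ∈ U.powersetCard s with Disjoint V T, c V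
        = ∑ V ∈ U.powersetCard s, if Disjoint V T then (C : R) * c V else 0 := by
          rw [Finset.mul_sum, Finset.sum_filter]
      _ = ∑ V ∈ U.powersetCard s, ∑ S ∈ U.powersetCard t with T ⊆ S ∧ Disjoint V S, c V :=
          (Finset.sum_congr rfl hcount).symm
      _ = ∑ V ∈ U.powersetCard s, ∑ S ∈ U.powersetCard t with T ⊆ S,
            if Disjoint V S then c V else 0 :=
          Finset.sum_congr rfl fun V _ => by rw [← Finset.filter_filter, Finset.sum_filter]
      _ = _ := by
          rw [Finset.sum_comm]
          simp_rw [Finset.sum_filter]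
  have hC : (C : R) ≠ 0 := Nat.cast_ne_zero.2 (Nat.choose_pos (by omega)).ne'
  rw [Finset.sum_eq_zero fun S hS => hc S (Finset.mem_filter.1 hS).1] at hdouble
  exact (mul_eq_zero.1 hdouble).resolve_left hC


theorem sum_powerset_neg_one_pow_mul_sum_disjoint (𝒱 : Finset (Finset α)) (c : Finset α → R)
    (V₀ : Finset α) :
    ∑ T ∈ V₀.powerset, (-1 : R) ^ T.card * ∑ V ∈ 𝒱 with Disjoint V T, c V =
      ∑ V ∈ 𝒱 with V₀ ⊆ V, c V := by
  have hinner : ∀ V ∈ 𝒱, ∑ T ∈ V₀.powerset with Disjoint V T, (-1 : R) ^ T.card * c V =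
      if V₀ ⊆ V then c V else 0 := by
    intro V _
    have hfilter : V₀.powerset.filter (Disjoint V) = (V₀ \ V).powerset := by
      ext T
      simp only [Finset.mem_filter, Finset.mem_powerset, Finset.subset_sdiff, disjoint_comm]
    have := congrArg (Int.cast : ℤ → R) (Finset.sum_powerset_neg_one_pow_card (x := V₀ \ V))
    push_cast at this
    rw [hfilter, ← Finset.sum_mul, this]
    simp only [Finset.sdiff_eq_empty_iff_subset, ite_mul, one_mul, zero_mul]
  rw [Finset.sum_filter (p := fun V => V₀ ⊆ V), ← Finset.sum_congr rfl hinner]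
  simp_rw [Finset.mul_sum, Finset.sum_filter]
  exact Finset.sum_comm

theorem eq_zero_of_forall_sum_disjoint_eq_zero [NoZeroDivisors R] [CharZero R] {U : Finset α}
    {s t : ℕ} (hst : s ≤ t) (hU : s + t ≤ U.card) {c : Finset α → R}
    (hc : ∀ S ∈ U.powersetCard t, ∑ V ∈ U.powersetCard s with Disjoint V S, c V = 0) :
    ∀ V₀ ∈ U.powersetCard s, c V₀ = 0 := by
  intro V₀ hV₀
  obtain ⟨hV₀U, hV₀s⟩ := Finset.mem_powersetCard.1 hV₀
  have hsingleton : (U.powersetCard s).filter (V₀ ⊆ ·) = {V₀} := by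
    ext V
    simp only [Finset.mem_filter, Finset.mem_powersetCard, Finset.mem_singleton]
    refine ⟨fun ⟨⟨_, hV⟩, hV₀V⟩ => (Finset.eq_of_subset_of_card_le hV₀V (by omega)).symm, ?_⟩
    rintro rfl
    exact ⟨⟨hV₀U, hV₀s⟩, subset_rfl⟩
  rw [← Finset.sum_singleton c V₀, ← hsingleton,
    ← sum_powerset_neg_one_pow_mul_sum_disjoint]
  refine Finset.sum_eq_zero fun T hT => ?_
  have hTV₀ := Finset.mem_powerset.1 hT
  rw [sum_disjoint_eq_zero_of_card_le hU hc (hTV₀.trans hV₀U)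
    ((Finset.card_le_card hTV₀).trans (hV₀s ▸ hst)), mul_zero]

end DisjointnessMatrix

section CanonicalMonomials

variable {K : Type*} [Field K] {U : Finset ℤ} {k d : ℕ}

theorem canonMatching_mem_matchings_sdiff_iff {j : ℕ} {S V : Finset ℤ}
    (hS : S ∈ U.powersetCard (2 * j)) :
    canonMatching S ∈ matchings (U \ V) j ↔ Disjoint V S := by
  obtain ⟨hSU, hS⟩ := Finset.mem_powersetCard.1 hS
  rw [mem_matchings_s9, isMatching_sdiff_iff, card_canonMatching_of_card_eq hS,
    verts_canonMatching (hS ▸ even_two_mul j), disjoint_comm]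
  simp [(isMatching_canonMatching S).mono hSU]

theorem linearIndepOn_Phi_sdiff [CharZero K] {s j : ℕ} (hs : s ≤ 2 * j)
    (hU : s + 2 * j ≤ U.card) :
    LinearIndepOn K (fun V => Phi K (U \ V) j) (U.powersetCard s) := by
  rw [linearIndepOn_finset_iff]
  intro c hc
  refine eq_zero_of_forall_sum_disjoint_eq_zero hs hU fun S hS => ?_
  have hcoeff := congrArg (coeff (indicatorExp (canonMatching S))) hc
  simp only [coeff_sum, coeff_smul, coeff_indicatorExp_Phi,
    canonMatching_mem_matchings_sdiff_iff hS, smul_eq_mul, mul_ite, mul_one, mul_zero,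
    coeff_zero] at hcoeff
  rwa [Finset.sum_filter]

theorem diffOp_prod_X_canonMatching {V : Finset ℤ} (hV : V ∈ U.powersetCard (2 * d))
    (hdk : d ≤ k) :
    diffOp K (Phi K U k) (∏ e ∈ canonMatching V, X e) = Phi K (U \ V) (k - d) := by
  obtain ⟨hVU, hV⟩ := Finset.mem_powersetCard.1 hV
  have hcard := card_canonMatching_of_card_eq hV
  rw [diffOp_prod_X_of_isMatching ((isMatching_canonMatching V).mono hVU) (hcard ▸ hdk), hcard,
    verts_canonMatching (hV ▸ even_two_mul d)]

theorem mkQ_monomial_mem_span_canonMatching (hdk : d ≤ k) {m : Finset ℤ →₀ ℕ}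
    (hm : m.degree = d) :
    (Ann K (Phi K U k)).mkQ (monomial m 1) ∈
      Submodule.span K (Set.range fun V : (U.powersetCard (2 * d) : Finset (Finset ℤ)) =>
        (Ann K (Phi K U k)).mkQ (∏ e ∈ canonMatching V.1, X e)) := by
  by_cases h0 : dmon m (Phi K U k) = 0
  · rw [show (Ann K (Phi K U k)).mkQ (monomial m 1) = 0 by
      rw [← map_zero (Ann K (Phi K U k)).mkQ, mkQ_Ann_eq_iff, diffOp_monomial, h0, map_zero]]
    exact Submodule.zero_mem _
  rw [dmon_Phi] at h0
  obtain ⟨M, hM, -⟩ := Finset.exists_ne_zero_of_sum_ne_zero h0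
  obtain ⟨hM, hmM⟩ := Finset.mem_filter.1 hM
  have hmS := eq_indicatorExp_support_of_le hmM
  set S := m.support
  have hS : IsMatching U S :=
    (mem_matchings_s9.1 hM).1.subset (indicatorExp_le_iff.1 (hmS ▸ hmM))
  have hSd : S.card = d := by rw [← degree_indicatorExp, ← hmS, hm]
  have hV : verts S ∈ U.powersetCard (2 * d) :=
    Finset.mem_powersetCard.2 ⟨hS.verts_subset, by rw [hS.card_verts, hSd]⟩
  have hclass : (Ann K (Phi K U k)).mkQ (monomial m 1) =
      (Ann K (Phi K U k)).mkQ (∏ e ∈ canonMatching (verts S), X e) := by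
    rw [mkQ_Ann_eq_iff, diffOp_prod_X_canonMatching hV hdk, hmS,
      ← prod_X_eq_monomial_indicatorExp, diffOp_prod_X_of_isMatching hS (hSd ▸ hdk), hSd]
  rw [hclass]
  exact Submodule.subset_span ⟨⟨verts S, hV⟩, rfl⟩

end CanonicalMonomials

theorem canonical_monomials_basis_general {K : Type*} [Field K] [CharZero K]
    (U : Finset ℤ) (k : ℕ) (hk : 2 * k ≤ U.card)
    (d : ℕ) (hd : 2 * d ≤ k) :
    LinearIndependent K (fun V : (U.powersetCard (2 * d) : Finset (Finset ℤ)) =>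
      (Ann K (Phi K U k)).mkQ (∏ e ∈ canonMatching V.1, X e)) ∧
    Submodule.span K (Set.range fun V : (U.powersetCard (2 * d) : Finset (Finset ℤ)) =>
        (Ann K (Phi K U k)).mkQ (∏ e ∈ canonMatching V.1, X e)) =
      Submodule.map (Ann K (Phi K U k)).mkQ (homogeneousSubmodule (Finset ℤ) K d) := by
  have hdk : d ≤ k := by omega
  refine ⟨?_, le_antisymm ?_ ?_⟩
  · have hPhi : LinearIndependent K fun V : (U.powersetCard (2 * d) : Finset (Finset ℤ)) =>
        Phi K (U \ V.1) (k - d) := linearIndepOn_Phi_sdiff (by omega) (by omega)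
    refine LinearIndependent.of_comp ((Ann K (Phi K U k)).liftQ (diffOp K (Phi K U k)) le_rfl) ?_
    convert hPhi using 2 with V
    · exact diffOp_prod_X_canonMatching V.2 hdk
    · rfl
  · rw [Submodule.span_le]
    rintro _ ⟨V, rfl⟩
    refine Submodule.mem_map_of_mem ?_
    rw [mem_homogeneousSubmodule, prod_X_eq_monomial_indicatorExp]
    exact isHomogeneous_monomial _ <| by
      rw [degree_indicatorExp, card_canonMatching_of_card_eq (Finset.mem_powersetCard.1 V.2).2]
  · rw [homogeneousSubmodule_eq_finsupp_supported, AddMonoidAlgebra.supported_eq_span_single,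
      Submodule.map_span, Submodule.span_le]
    rintro _ ⟨_, ⟨m, hm, rfl⟩, rfl⟩
    exact mkQ_monomial_mem_span_canonMatching hdk hm

/-- when `2k ≤ |U|` and `2d ≤ k`, the images in `A_{U,k} = P_U/Ann(Φ_{U,k})` of
the monomials `x^{M(V)}`, `V ∈ C(U,2d)`, form a basis of the degree-`d` component: they are
linearly independent and span the image of the degree-`d` homogeneous polynomials. -/
theorem canonical_monomials_basis {K : Type*} [Field K] [CharZero K]
    (U : Finset ℤ) (hU : U.Nonempty) (k : ℕ) (hk : 2 * k ≤ U.card)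
    (d : ℕ) (hd : 2 * d ≤ k) :
    LinearIndependent K (fun V : (U.powersetCard (2 * d) : Finset (Finset ℤ)) =>
      (Ann K (Phi K U k)).mkQ (∏ e ∈ canonMatching V.1, X e)) ∧
    Submodule.span K (Set.range fun V : (U.powersetCard (2 * d) : Finset (Finset ℤ)) =>
        (Ann K (Phi K U k)).mkQ (∏ e ∈ canonMatching V.1, X e)) =
      Submodule.map (Ann K (Phi K U k)).mkQ (homogeneousSubmodule (Finset ℤ) K d) :=
  canonical_monomials_basis_general U k hk d hd
end
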